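/- arXiv:math/0508098 — 7 statements merged into one kernel-verified Lean document; each statement's English description precedes it below -/
import Mathlib

section
/- Let p > 1, h > 0, and let λ > 0 be the unique real root of z + 1 = p·e^{-zh}. If z is a complex number with z + 1 = p·e^{-zh} and Im z ≠ 0, then Re z < λ. -/
/-!
Taking moduli in `z + 1 = p e^{-zh}` gives `|z + 1| = p e^{-h Re z}`, and since `Im z ≠ 0`,
`Re z + 1 < |z + 1|`. So `x = Re z` satisfies `x + 1 < p e^{-hx}`; as `x ↦ x + 1 - p e^{-hx}` is
increasing and vanishes at `λ`, this forces `Re z < λ`.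
-/

theorem Complex.re_add_one_lt_of_add_one_eq_mul_exp {p h : ℝ} {z : ℂ} (hp : 0 < p)
    (hz : z + 1 = (p : ℂ) * Complex.exp (-z * (h : ℂ))) (him : z.im ≠ 0) :
    z.re + 1 < p * Real.exp (-z.re * h) := by
  have hnorm : ‖z + 1‖ = p * Real.exp (-z.re * h) := by
    rw [hz, norm_mul, Complex.norm_exp, Complex.norm_real, Real.norm_of_nonneg hp.le]
    simp
  calc z.re + 1 ≤ |(z + 1).re| := by simpa using le_abs_self (z + 1).re
    _ < ‖z + 1‖ := Complex.abs_re_lt_norm.2 (by simpa using him)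
    _ = p * Real.exp (-z.re * h) := hnorm

theorem lt_of_add_one_lt_mul_exp {p h lam x : ℝ} (hp : 0 < p) (hh : 0 ≤ h)
    (hlam : lam + 1 = p * Real.exp (-lam * h)) (hx : x + 1 < p * Real.exp (-x * h)) :
    x < lam := by
  by_contra! hle
  have : p * Real.exp (-x * h) ≤ p * Real.exp (-lam * h) := by gcongr
  linarith

theorem stmt_1_general (p h lam : ℝ) (hp : 1 < p) (hh : 0 < h)
    (hlam : lam + 1 = p * Real.exp (-lam * h))
    (z : ℂ) (hz : z + 1 = (p : ℂ) * Complex.exp (-z * (h : ℂ)))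
    (him : z.im ≠ 0) :
    z.re < lam := by
  have hp₀ : 0 < p := by linarith
  exact lt_of_add_one_lt_mul_exp hp₀ hh.le hlam
    (Complex.re_add_one_lt_of_add_one_eq_mul_exp hp₀ hz him)

/-- Non-real complex roots of `z + 1 = p * exp (-z*h)` have real part strictly less than
the unique positive real root `λ`. -/
theorem stmt_1 (p h lam : ℝ) (hp : 1 < p) (hh : 0 < h)
    (hlam_pos : 0 < lam) (hlam : lam + 1 = p * Real.exp (-lam * h))
    (z : ℂ) (hz : z + 1 = (p : ℂ) * Complex.exp (-z * (h : ℂ)))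
    (him : z.im ≠ 0) :
    z.re < lam :=
  stmt_1_general p h lam hp hh hlam z hz him
end

section
/- Let p > 1, h > 0, and 0 < δ < 2(p-1). Let λ be the unique positive root of z + 1 = p·e^{-zh} and λ_δ the unique positive root of z + 1 = (p - δ/2)·e^{-zh}. Then λ_δ > λ - δ/2. -/
/-- If `λ` is the positive root of `z + 1 = p e^{-zh}` and `λ_δ` the positive root of
`z + 1 = (p - δ/2) e^{-zh}`, then `λ_δ > λ - δ/2`. -/
theorem stmt_2 (p h δ lam lamδ : ℝ) (hp : 1 < p) (hh : 0 < h)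
    (hδ0 : 0 < δ) (hδ : δ < 2 * (p - 1))
    (hlam_pos : 0 < lam) (hlam : lam + 1 = p * Real.exp (-lam * h))
    (hlamδ_pos : 0 < lamδ)
    (hlamδ : lamδ + 1 = (p - δ / 2) * Real.exp (-lamδ * h)) :
    lamδ > lam - δ / 2 := by
  by_cases hc : lam - δ / 2 ≤ 0
  · linarith
  push_neg at hc
  by_contra hcon
  push_neg at hcon
  -- key identities via multiplying by e^{zh}
  have hE : ∀ x : ℝ, Real.exp (-x * h) * Real.exp (x * h) = 1 := by
    intro x
    rw [← Real.exp_add]; ring_nf; exact Real.exp_zero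
  have h1 : (lam + 1) * Real.exp (lam * h) = p := by
    have := congrArg (· * Real.exp (lam * h)) hlam
    rw [this, mul_assoc, hE lam, mul_one]
  have h2 : (lamδ + 1) * Real.exp (lamδ * h) = p - δ / 2 := by
    have := congrArg (· * Real.exp (lamδ * h)) hlamδ
    rw [this, mul_assoc, hE lamδ, mul_one]
  -- g is monotone: (lamδ+1) e^{lamδ h} ≤ (lam - δ/2 + 1) e^{(lam-δ/2) h}
  have hmono : (lamδ + 1) * Real.exp (lamδ * h) ≤
      (lam - δ / 2 + 1) * Real.exp ((lam - δ / 2) * h) := by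
    apply mul_le_mul (by linarith) _ (Real.exp_pos _).le (by linarith)
    exact Real.exp_le_exp.mpr (by nlinarith)
  have hstep : (lam - δ / 2 + 1) * Real.exp ((lam - δ / 2) * h) ≤
      (lam - δ / 2 + 1) * Real.exp (lam * h) := by
    apply mul_le_mul_of_nonneg_left _ (by linarith)
    exact Real.exp_le_exp.mpr (by nlinarith)
  have hgt : Real.exp (lam * h) > 1 := by
    rw [show (1:ℝ) = Real.exp 0 from (Real.exp_zero).symm]
    exact Real.exp_lt_exp.mpr (by positivity)
  nlinarith [hmono, hstep, h1, h2, hgt]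
end

section
/- Let p > 1, h > 0, and 0 < ε < 1/(2·√(p-1)). Then the equation ε²z² - z - 1 + p·e^{-zh} = 0 has at least two real roots: one root λ₁ with λ < λ₁ < 2(p-1), where λ is the unique positive root of -z - 1 + p·e^{-zh} = 0, and one root λ_∞ with ε^{-2} - 2(p-1) < λ_∞ < ε^{-2} + 1. -/
/-- For small `ε > 0`, the equation `ε²z² - z - 1 + p e^{-zh} = 0` has two real roots,
one in `(λ, 2(p-1))` and one in `(ε⁻² - 2(p-1), ε⁻² + 1)`. -/
theorem stmt_3 (p h ε lam : ℝ) (hp : 1 < p) (hh : 0 < h)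
    (hε0 : 0 < ε) (hε : ε < 1 / (2 * Real.sqrt (p - 1)))
    (hlam_pos : 0 < lam) (hlam : -lam - 1 + p * Real.exp (-lam * h) = 0) :
    (∃ l1 : ℝ, ε ^ 2 * l1 ^ 2 - l1 - 1 + p * Real.exp (-l1 * h) = 0 ∧
      lam < l1 ∧ l1 < 2 * (p - 1)) ∧
    (∃ linf : ℝ, ε ^ 2 * linf ^ 2 - linf - 1 + p * Real.exp (-linf * h) = 0 ∧
      1 / ε ^ 2 - 2 * (p - 1) < linf ∧ linf < 1 / ε ^ 2 + 1) := by
  have hp1 : (0:ℝ) < p - 1 := by linarith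
  set f : ℝ → ℝ := fun z => ε ^ 2 * z ^ 2 - z - 1 + p * Real.exp (-z * h) with hf
  have hcont : Continuous f := by
    apply Continuous.add
    · fun_prop
    · exact continuous_const.mul (Real.continuous_exp.comp (by fun_prop))
  -- ε² < 1/(4(p-1))
  have hsqrt : (0:ℝ) < Real.sqrt (p - 1) := Real.sqrt_pos.mpr hp1
  have hsq : ε ^ 2 < 1 / (4 * (p - 1)) := by
    have h1 : ε ^ 2 < (1 / (2 * Real.sqrt (p - 1))) ^ 2 :=
      pow_lt_pow_left₀ hε hε0.le (by norm_num)
    have h2 : (1 / (2 * Real.sqrt (p - 1))) ^ 2 = 1 / (4 * (p - 1)) := by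
      rw [div_pow, mul_pow, Real.sq_sqrt hp1.le]
      norm_num
    linarith
  have hε2 : (0:ℝ) < ε ^ 2 := by positivity
  -- lam < p - 1
  have hexp_lam : Real.exp (-lam * h) < 1 := by
    rw [Real.exp_lt_one_iff]
    nlinarith
  have hlam_lt : lam < p - 1 := by nlinarith [Real.exp_pos (-lam * h)]
  constructor
  · -- first root
    have hfa : 0 < f lam := by
      have : f lam = ε ^ 2 * lam ^ 2 + (-lam - 1 + p * Real.exp (-lam * h)) := by
        simp [hf]; ring
      rw [this, hlam]
      positivity
    have hfb : f (2 * (p - 1)) < 0 := by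
      have he : Real.exp (-(2 * (p - 1)) * h) < 1 := by
        rw [Real.exp_lt_one_iff]; nlinarith
      have hsq1 : ε ^ 2 * (4 * (p - 1)) < 1 := (lt_div_iff₀ (by positivity)).mp hsq
      have h4 : ε ^ 2 * (2 * (p - 1)) ^ 2 < p - 1 := by nlinarith
      simp only [hf]
      nlinarith [Real.exp_pos (-(2 * (p - 1)) * h)]
    have hab : lam ≤ 2 * (p - 1) := by linarith
    have := intermediate_value_Ioo' hab hcont.continuousOn
    obtain ⟨l1, hl1mem, hl1⟩ := this (Set.mem_Ioo.mpr ⟨hfb, hfa⟩)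
    exact ⟨l1, hl1, hl1mem.1, hl1mem.2⟩
  · -- second root
    set a := 1 / ε ^ 2 - 2 * (p - 1) with ha
    set b := 1 / ε ^ 2 + 1 with hb
    have hinv : ε ^ 2 * (1 / ε ^ 2) = 1 := by field_simp
    have hsq1 : ε ^ 2 * (4 * (p - 1)) < 1 := (lt_div_iff₀ (by positivity)).mp hsq
    have hne : (ε:ℝ) ^ 2 ≠ 0 := ne_of_gt hε2
    have hs : 4 * (p - 1) < 1 / ε ^ 2 := by
      rw [lt_div_iff₀ hε2]; nlinarith
    have ha_pos : 0 < a := by simp only [ha]; nlinarith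
    have hb_pos : 0 < b := by simp only [hb]; positivity
    have hfa : f a < 0 := by
      have he : Real.exp (-a * h) < 1 := by
        rw [Real.exp_lt_one_iff]; nlinarith
      simp only [hf]
      have h4 : 4 * (p - 1) ^ 2 * ε ^ 2 < p - 1 := by nlinarith
      have key : ε ^ 2 * a ^ 2 - a - 1 + p < 0 := by
        have : ε ^ 2 * a = 1 - 2 * (p - 1) * ε ^ 2 := by
          simp only [ha]; rw [mul_sub, hinv]; ring
        nlinarith [ha_pos]
      nlinarith [Real.exp_pos (-a * h)]
    have hfb : 0 < f b := by
      simp only [hf]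
      have heq : ε ^ 2 * b ^ 2 - b - 1 = ε ^ 2 := by
        have : b ^ 2 = (1 / ε ^ 2) * (1 / ε ^ 2) + 2 * (1 / ε ^ 2) + 1 := by
          simp only [hb]; ring
        rw [this]
        have h2 : ε ^ 2 * ((1 / ε ^ 2) * (1 / ε ^ 2) + 2 * (1 / ε ^ 2) + 1)
            = (1 / ε ^ 2) + 2 + ε ^ 2 := by
          rw [mul_add, mul_add, ← mul_assoc, hinv, one_mul]
          rw [mul_comm (ε ^ 2) (2 * (1 / ε ^ 2)), mul_assoc, mul_comm (1 / ε ^ 2) (ε ^ 2), hinv]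
          ring
        rw [h2]; simp only [hb]; ring
      have hpe : 0 < p * Real.exp (-b * h) := by positivity
      linarith
    have hab : a ≤ b := by simp only [ha, hb]; linarith
    have := intermediate_value_Ioo hab hcont.continuousOn
    obtain ⟨linf, hlmem, hl⟩ := this (Set.mem_Ioo.mpr ⟨hfa, hfb⟩)
    exact ⟨linf, hl, hlmem.1, hlmem.2⟩
end

section
/- Let p > 1, h > 0, ξ ∈ ℝ, and 0 < ε ≤ 1/(4·√(p-1)). If z is a complex root of ε²z² - z - 1 + p·e^{-zh} = 0 with ξ ≤ Re z ≤ 2(p-1), then |Im z| ≤ 2p·e^{-ξh}. -/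
/-! Taking imaginary parts in `p e^{-zh} = -(ε²z² - z - 1)` gives
`Im z · (1 - 2ε² Re z) = Im (p e^{-zh})`, which is at most `|p e^{-zh}| = p e^{-h Re z} ≤ p e^{-ξh}`.
The smallness of `ε` and `Re z ≤ 2(p-1)` give `1 - 2ε² Re z ≥ 1/2`. -/

open Complex

lemma im_sq_mul_sq_sub_sub_one (ε : ℝ) (z : ℂ) :
    ((ε : ℂ) ^ 2 * z ^ 2 - z - 1).im = -(z.im * (1 - 2 * ε ^ 2 * z.re)) := by
  simp only [sub_im, mul_im, pow_two, ofReal_re, ofReal_im, mul_re, one_im]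
  ring

lemma norm_ofReal_mul_exp_neg_mul_le {p h ξ : ℝ} (hp : 0 ≤ p) (hh : 0 ≤ h) {z : ℂ}
    (hξ : ξ ≤ z.re) : ‖(p : ℂ) * exp (-z * h)‖ ≤ p * Real.exp (-ξ * h) := by
  rw [norm_mul, norm_exp, norm_real, Real.norm_of_nonneg hp]
  gcongr
  simpa [mul_re] using mul_le_mul_of_nonneg_right hξ hh

lemma sq_le_of_le_one_div_four_mul_sqrt {c ε : ℝ} (hc : 0 < c) (hε0 : 0 ≤ ε)
    (hε : ε ≤ 1 / (4 * Real.sqrt c)) : ε ^ 2 ≤ 1 / (16 * c) := by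
  calc ε ^ 2 ≤ (1 / (4 * Real.sqrt c)) ^ 2 := pow_le_pow_left₀ hε0 hε 2
    _ = 1 / (16 * c) := by rw [div_pow, one_pow, mul_pow, Real.sq_sqrt hc.le]; norm_num

lemma half_le_one_sub_two_mul_sq_mul {c ε x : ℝ} (hc : 0 < c) (hε0 : 0 ≤ ε)
    (hε : ε ≤ 1 / (4 * Real.sqrt c)) (hx : x ≤ 2 * c) : 1 / 2 ≤ 1 - 2 * ε ^ 2 * x := by
  rcases le_or_gt x 0 with hx0 | hx0
  · nlinarith [sq_nonneg ε]
  · have hε2 := sq_le_of_le_one_div_four_mul_sqrt hc hε0 hε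
    have : ε ^ 2 * x ≤ 1 / 8 :=
      calc ε ^ 2 * x ≤ 1 / (16 * c) * (2 * c) := mul_le_mul hε2 hx hx0.le (by positivity)
        _ = 1 / 8 := by field_simp; ring
    linarith

/-- Complex roots of `ε²z² - z - 1 + p e^{-zh} = 0` with real part in `[ξ, 2(p-1)]`
have imaginary part bounded by `2p e^{-ξh}`. -/
theorem stmt_8 (p h ξ ε : ℝ) (hp : 1 < p) (hh : 0 < h)
    (hε0 : 0 < ε) (hε : ε ≤ 1 / (4 * Real.sqrt (p - 1)))
    (z : ℂ)
    (hroot : (ε : ℂ) ^ 2 * z ^ 2 - z - 1 + (p : ℂ) * Complex.exp (-z * (h : ℂ)) = 0)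
    (hre1 : ξ ≤ z.re) (hre2 : z.re ≤ 2 * (p - 1)) :
    |z.im| ≤ 2 * p * Real.exp (-ξ * h) := by
  have hfactor : 1 / 2 ≤ 1 - 2 * ε ^ 2 * z.re :=
    half_le_one_sub_two_mul_sq_mul (by linarith) hε0.le hε hre2
  have him : ((p : ℂ) * exp (-z * h)).im = z.im * (1 - 2 * ε ^ 2 * z.re) := by
    rw [eq_neg_of_add_eq_zero_right hroot, neg_im, im_sq_mul_sq_sub_sub_one, neg_neg]
  have hbound : |z.im| * (1 - 2 * ε ^ 2 * z.re) ≤ p * Real.exp (-ξ * h) :=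
    calc |z.im| * (1 - 2 * ε ^ 2 * z.re)
        = |((p : ℂ) * exp (-z * h)).im| := by
          rw [him, abs_mul, abs_of_pos (by linarith : 0 < 1 - 2 * ε ^ 2 * z.re)]
      _ ≤ ‖(p : ℂ) * exp (-z * h)‖ := abs_im_le_norm _
      _ ≤ p * Real.exp (-ξ * h) := norm_ofReal_mul_exp_neg_mul_le (by linarith) hh.le hre1
  nlinarith [abs_nonneg z.im]
end

section
/- Let Γ < 0 and h > 0 with |Γ|·h·e^{h+1} > 1. Then the function Δ₀(z) = -z - 1 + Γ·e^{-zh} has no real zeros; in fact Δ₀(z) < 0 for all real z. -/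
/-- If `Γ < 0`, `h > 0` and `|Γ| h e^{h+1} > 1`, then `Δ₀(z) = -z - 1 + Γ e^{-zh} < 0`
for all real `z`. -/
theorem stmt_9 (Γ h : ℝ) (hΓ : Γ < 0) (hh : 0 < h)
    (hcond : |Γ| * h * Real.exp (h + 1) > 1) :
    ∀ z : ℝ, -z - 1 + Γ * Real.exp (-z * h) < 0 := by
  intro z
  have habs : |Γ| = -Γ := abs_of_neg hΓ
  rcases le_or_gt (-1) z with hz | hz
  · have h1 : Γ * Real.exp (-z * h) < 0 :=
      mul_neg_of_neg_of_pos hΓ (Real.exp_pos _)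
    linarith
  · set t := h * (-z - 1) with ht
    have htpos : 0 < t := mul_pos hh (by linarith)
    have hexp : Real.exp (-z * h) = Real.exp (t + h) := by
      congr 1; rw [ht]; ring
    have h2 : t ≤ Real.exp (t - 1) := by
      have := Real.add_one_le_exp (t - 1); linarith
    have h3 : Real.exp (t + h) = Real.exp (t - 1) * Real.exp (h + 1) := by
      rw [← Real.exp_add]; ring_nf
    have key : t < |Γ| * h * Real.exp (h + 1) * Real.exp (t - 1) := by
      calc t ≤ Real.exp (t - 1) := h2
        _ = 1 * Real.exp (t - 1) := by ring
        _ < _ := mul_lt_mul_of_pos_right hcond (Real.exp_pos _)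
    rw [hexp, h3]
    rw [habs, ht] at key
    nlinarith [Real.exp_pos (t - 1), Real.exp_pos (h + 1)]
end

section
/- Let Γ < 0, h > 0 with h·|Γ| ≥ 1, and 0 < ε with ε² < h/2. Then Δ_ε(z) = ε²z² - z - 1 + Γ·e^{-zh} satisfies Δ_ε'(z) > 0 for all z < 0 and consequently Δ_ε(z) < 0 for all z ≤ 0. -/
/-- If `Γ < 0`, `h|Γ| ≥ 1` and `ε² < h/2`, then the derivative
`Δ_ε'(z) = 2ε²z - 1 - hΓe^{-zh}` is positive for `z < 0`, and `Δ_ε(z) < 0` for `z ≤ 0`. -/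
theorem stmt_11 (Γ h ε : ℝ) (hΓ : Γ < 0) (hh : 0 < h)
    (hhΓ : h * |Γ| ≥ 1) (hε0 : 0 < ε) (hε : ε ^ 2 < h / 2) :
    (∀ z : ℝ, z < 0 → 0 < 2 * ε ^ 2 * z - 1 - h * Γ * Real.exp (-z * h)) ∧
    (∀ z : ℝ, z ≤ 0 → ε ^ 2 * z ^ 2 - z - 1 + Γ * Real.exp (-z * h) < 0) := by
  rw [abs_of_neg hΓ] at hhΓ
  constructor
  · intro z hz
    have hx : (0:ℝ) < -z * h := mul_pos (by linarith) hh
    have h1 : -z * h + 1 < Real.exp (-z * h) := Real.add_one_lt_exp hx.ne'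
    have h2 : (1:ℝ) ≤ Real.exp (-z * h) := by nlinarith
    nlinarith [mul_pos_of_neg_of_neg hz (by linarith : 2 * ε ^ 2 - h < 0),
      mul_nonneg (by linarith : (0:ℝ) ≤ h * -Γ - 1) (by linarith : (0:ℝ) ≤ Real.exp (-z * h) - 1)]
  · intro z hz
    have hx : (0:ℝ) ≤ -z * h := mul_nonneg (by linarith) hh.le
    have h1 : 1 + (-z * h) + (-z * h) ^ 2 / 2 ≤ Real.exp (-z * h) :=
      Real.quadratic_le_exp_of_nonneg hx
    have h2 : Γ * Real.exp (-z * h) ≤ Γ * (1 + (-z * h) + (-z * h) ^ 2 / 2) := by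
      nlinarith
    have hΓh : Γ * h ≤ -1 := by nlinarith
    nlinarith [sq_nonneg z, mul_nonneg (mul_nonneg (neg_nonneg.mpr hz) hh.le) (by linarith : (0:ℝ) ≤ h * -Γ - 1), mul_nonneg (sq_nonneg z) (by linarith : (0:ℝ) ≤ h / 2 - ε ^ 2)]
end

section
/- Let p > 1, h > 0. Define λ as the unique positive root of z + 1 = p·e^{-zh}, and for ε ∈ (0, 1/(2√(p-1))) let λ₁(ε) denote the smallest positive root of ε²z² - z - 1 + p·e^{-zh} = 0. Then λ₁(ε) → λ as ε → 0⁺. -/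
open Filter

/-- The minimal positive root `λ₁(ε)` of `ε²z² - z - 1 + p e^{-zh} = 0` tends to the
unique positive root `λ` of `z + 1 = p e^{-zh}` as `ε → 0⁺`. -/
theorem stmt_18 (p h lam : ℝ) (hp : 1 < p) (hh : 0 < h)
    (hlam_pos : 0 < lam) (hlam : lam + 1 = p * Real.exp (-lam * h))
    (lam₁ : ℝ → ℝ)
    (hlam₁ : ∀ ε ∈ Set.Ioo (0 : ℝ) (1 / (2 * Real.sqrt (p - 1))),
      0 < lam₁ ε ∧
      ε ^ 2 * (lam₁ ε) ^ 2 - lam₁ ε - 1 + p * Real.exp (-(lam₁ ε) * h) = 0 ∧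
      ∀ z : ℝ, 0 < z → ε ^ 2 * z ^ 2 - z - 1 + p * Real.exp (-z * h) = 0 →
        lam₁ ε ≤ z) :
    Tendsto lam₁ (nhdsWithin 0 (Set.Ioi 0)) (nhds lam) := by
  have hp1 : (0:ℝ) < p - 1 := by linarith
  have hBpos : 0 < 1 / (2 * Real.sqrt (p - 1)) := by
    have := Real.sqrt_pos.mpr hp1
    positivity
  -- strict monotonicity of F z = z + 1 - p exp (-z h)
  have hF : ∀ a b : ℝ, a < b →
      a + 1 - p * Real.exp (-a * h) < b + 1 - p * Real.exp (-b * h) := by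
    intro a b hab
    have h1 : Real.exp (-b * h) < Real.exp (-a * h) := by
      apply Real.exp_lt_exp.mpr; nlinarith
    nlinarith [Real.exp_pos (-b * h)]
  rw [Metric.tendsto_nhdsWithin_nhds]
  intro δ hδ
  have hld : 0 < lam + δ := by linarith
  have hM : 0 < (lam + δ) + 1 - p * Real.exp (-(lam + δ) * h) := by
    have := hF lam (lam + δ) (by linarith); linarith
  set M := (lam + δ) + 1 - p * Real.exp (-(lam + δ) * h) with hMdef
  refine ⟨min (1 / (2 * Real.sqrt (p - 1))) (Real.sqrt M / (lam + δ)),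
    lt_min hBpos (by positivity), ?_⟩
  intro ε hε hdist
  rw [Real.dist_eq] at hdist ⊢
  have hεpos : 0 < ε := hε
  rw [sub_zero, abs_of_pos hεpos] at hdist
  have hεB : ε < 1 / (2 * Real.sqrt (p - 1)) := lt_of_lt_of_le hdist (min_le_left _ _)
  have hεM : ε < Real.sqrt M / (lam + δ) := lt_of_lt_of_le hdist (min_le_right _ _)
  obtain ⟨hpos1, heq1, hmin1⟩ := hlam₁ ε ⟨hεpos, hεB⟩
  -- lower bound : lam < lam₁ ε
  have hlow : lam < lam₁ ε := by
    by_contra hcon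
    push_neg at hcon
    rcases eq_or_lt_of_le hcon with he | hl
    · rw [he] at heq1
      nlinarith [mul_pos (mul_pos hεpos hlam_pos) (mul_pos hεpos hlam_pos)]
    · have := hF (lam₁ ε) lam hl
      nlinarith
  -- upper bound : there is a root below lam + δ
  have hcont : ContinuousOn (fun z : ℝ => ε ^ 2 * z ^ 2 - z - 1 + p * Real.exp (-z * h))
      (Set.Icc 0 (lam + δ)) := by
    apply Continuous.continuousOn
    fun_prop
  have hg0 : (0:ℝ) ∈ Set.Ioo
      (ε ^ 2 * (lam + δ) ^ 2 - (lam + δ) - 1 + p * Real.exp (-(lam + δ) * h))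
      (ε ^ 2 * (0:ℝ) ^ 2 - 0 - 1 + p * Real.exp (-(0:ℝ) * h)) := by
    constructor
    · have h1 : ε * (lam + δ) < Real.sqrt M := (lt_div_iff₀ hld).mp hεM
      have hs : Real.sqrt M ^ 2 = M := Real.sq_sqrt hM.le
      have h2 : ε ^ 2 * (lam + δ) ^ 2 < M := by
        have h3 := mul_self_lt_mul_self (by positivity) h1
        have h4 := Real.mul_self_sqrt hM.le
        nlinarith
      rw [hMdef] at h2
      linarith
    · norm_num [Real.exp_zero]
      linarith
  obtain ⟨z, hz, hz0⟩ := intermediate_value_Ioo' (le_of_lt hld) hcont hg0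
  have hle := hmin1 z hz.1 hz0
  have hub : lam₁ ε < lam + δ := lt_of_le_of_lt hle hz.2
  rw [abs_lt]
  constructor <;> linarith
end
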